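/- arXiv:2110.15029 — 2 statements merged into one kernel-verified Lean document; each statement's English description precedes it below -/
import Mathlib

section
/- (Overlay cardinality) Let T₀ be a finite set (an initial partition) and T₁, T₂ refinements of T₀ represented as finite partitions refining T₀. Define the overlay T of T₁ and T₂ as the set consisting of all cells of T₁ that contain no strictly smaller cell of T₂, together with all cells of T₂ that contain no strictly smaller cell of T₁. Then #T ≤ #T₁ + #T₂ − #T₀. -/
open scoped Classical

/-- A cell of the binary refinement forest rooted at the `n₀` cells of `T₀`:
a root index together with the list of left/right refinement choices. -/
abbrev RefCell (n₀ : ℕ) := Fin n₀ × List Bool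

/-- The cell `(i, l)` lies on the infinite path `f` from root `i`. -/
def OnPath (f : ℕ → Bool) (l : List Bool) : Prop :=
  l = (List.range l.length).map f

/-- A finite set of cells is a partition (refinement of the root partition `T₀`)
if every infinite path from every root meets exactly one cell of it. -/
def IsPartition {n₀ : ℕ} (P : Finset (RefCell n₀)) : Prop :=
  ∀ (i : Fin n₀) (f : ℕ → Bool), ∃! l : List Bool, (i, l) ∈ P ∧ OnPath f l

/-- `c` strictly contains `c'`: same root and the address of `c` is a proper
prefix of that of `c'` (so `c'` is a strictly smaller cell inside `c`). -/
def StrictlyContains {n₀ : ℕ} (c c' : RefCell n₀) : Prop :=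
  c.1 = c'.1 ∧ c.2 <+: c'.2 ∧ c.2 ≠ c'.2

/-- The overlay of two partitions: cells of `T₁` containing no strictly smaller
cell of `T₂`, together with cells of `T₂` containing no strictly smaller cell of `T₁`. -/
noncomputable def Overlay {n₀ : ℕ} (T₁ T₂ : Finset (RefCell n₀)) : Finset (RefCell n₀) :=
  (T₁.filter fun c => ¬ ∃ c' ∈ T₂, StrictlyContains c c') ∪
  (T₂.filter fun c => ¬ ∃ c' ∈ T₁, StrictlyContains c c')

/-- Any list lies on the path obtained by extending one of its extensions with `false`s. -/
lemma onPath_getD_of_prefix {l m : List Bool} (h : l <+: m) :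
    OnPath (fun n => m.getD n false) l := by
  unfold OnPath
  apply List.ext_getElem
  · simp
  · intro i h1 h2
    simp only [List.getElem_map, List.getElem_range]
    rw [List.getD_eq_getElem m false (lt_of_lt_of_le h1 h.length_le)]
    exact List.IsPrefix.getElem h h1

/-- Two cells on the same path are prefix-comparable. -/
lemma onPath_prefix_of_le {f : ℕ → Bool} {l m : List Bool}
    (hl : OnPath f l) (hm : OnPath f m) (h : l.length ≤ m.length) : l <+: m := by
  rw [hl, hm]
  refine List.IsPrefix.map f ?_
  have : (List.range m.length).take l.length = List.range l.length := by
    rw [List.take_range, min_eq_left h]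
  rw [← this]
  exact List.take_prefix _ _

/-- A partition is an antichain: no cell is a proper prefix of another. -/
lemma partition_antichain {n₀ : ℕ} {P : Finset (RefCell n₀)} (hP : IsPartition P)
    {i : Fin n₀} {l m : List Bool} (hl : (i, l) ∈ P) (hm : (i, m) ∈ P)
    (hpre : l <+: m) : l = m := by
  obtain ⟨u, _, huniq⟩ := hP i (fun n => m.getD n false)
  rw [huniq l ⟨hl, onPath_getD_of_prefix hpre⟩,
      huniq m ⟨hm, onPath_getD_of_prefix (List.prefix_refl m)⟩]

/-- overlay cardinality: `#T ≤ #T₁ + #T₂ − #T₀`. -/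
theorem overlay_card_le {n₀ : ℕ} (hn₀ : 0 < n₀)
    (T₁ T₂ : Finset (RefCell n₀))
    (h₁ : IsPartition T₁) (h₂ : IsPartition T₂) :
    (Overlay T₁ T₂).card ≤ T₁.card + T₂.card - n₀ := by
  set A : Finset (RefCell n₀) := T₁.filter fun c => ¬ ∃ c' ∈ T₂, StrictlyContains c c' with hA
  set B : Finset (RefCell n₀) := T₂.filter fun c => ¬ ∃ c' ∈ T₁, StrictlyContains c c' with hB
  have hOv : Overlay T₁ T₂ = A ∪ B := rfl
  set D : Finset (RefCell n₀) := (T₁ \ A) ∪ ((T₂ \ B) ∪ (A ∩ B)) with hD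
  -- For every root there is a cell of `D` at that root.
  have hex : ∀ i : Fin n₀, ∃ l : List Bool, (i, l) ∈ D := by
    intro i
    obtain ⟨l₁, ⟨hl₁, hp₁⟩, _⟩ := h₁ i (fun _ => false)
    obtain ⟨l₂, ⟨hl₂, hp₂⟩, _⟩ := h₂ i (fun _ => false)
    by_cases heq : l₁ = l₂
    · -- common cell: lies in `A ∩ B`
      subst heq
      refine ⟨l₁, ?_⟩
      have hAmem : (i, l₁) ∈ A := by
        rw [hA, Finset.mem_filter]
        refine ⟨hl₁, ?_⟩
        rintro ⟨⟨j, m⟩, hm, hj, hpre, hne⟩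
        obtain rfl : i = j := hj
        exact hne (partition_antichain h₂ hl₂ hm hpre)
      have hBmem : (i, l₁) ∈ B := by
        rw [hB, Finset.mem_filter]
        refine ⟨hl₂, ?_⟩
        rintro ⟨⟨j, m⟩, hm, hj, hpre, hne⟩
        obtain rfl : i = j := hj
        exact hne (partition_antichain h₁ hl₁ hm hpre)
      simp [hD, Finset.mem_union, Finset.mem_inter, hAmem, hBmem]
    · rcases le_total l₁.length l₂.length with hle | hle
      · -- `l₁` strictly contains `l₂`, so `(i,l₁) ∈ T₁ \ A`
        have hpre : l₁ <+: l₂ := onPath_prefix_of_le hp₁ hp₂ hle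
        refine ⟨l₁, ?_⟩
        have : (i, l₁) ∉ A := by
          rw [hA, Finset.mem_filter]
          rintro ⟨-, hno⟩
          exact hno ⟨(i, l₂), hl₂, rfl, hpre, heq⟩
        simp [hD, Finset.mem_union, Finset.mem_sdiff, hl₁, this]
      · have hpre : l₂ <+: l₁ := onPath_prefix_of_le hp₂ hp₁ hle
        refine ⟨l₂, ?_⟩
        have : (i, l₂) ∉ B := by
          rw [hB, Finset.mem_filter]
          rintro ⟨-, hno⟩
          exact hno ⟨(i, l₁), hl₁, rfl, hpre, fun h => heq h.symm⟩
        simp [hD, Finset.mem_union, Finset.mem_sdiff, hl₂, this]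
  choose g hg using hex
  have hcardD : n₀ ≤ D.card := by
    have := Finset.card_le_card_of_injOn (s := (Finset.univ : Finset (Fin n₀)))
      (fun i : Fin n₀ => (i, g i))
      (fun a _ => hg a) (fun a _ b _ h => congrArg Prod.fst h)
    simpa using this
  have hDle : D.card ≤ (T₁ \ A).card + ((T₂ \ B).card + (A ∩ B).card) :=
    le_trans (Finset.card_union_le _ _)
      (Nat.add_le_add_left (Finset.card_union_le _ _) _)
  have hie : (A ∪ B).card + (A ∩ B).card = A.card + B.card :=
    Finset.card_union_add_card_inter A B
  have hA₁ : (T₁ \ A).card + A.card = T₁.card :=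
    Finset.card_sdiff_add_card_eq_card (Finset.filter_subset _ _)
  have hB₂ : (T₂ \ B).card + B.card = T₂.card :=
    Finset.card_sdiff_add_card_eq_card (Finset.filter_subset _ _)
  rw [hOv]
  omega
end

section
/- (Dyadic counting lemma for the greedy algorithm) Let d ≥ 2, δ > 0, V > 0, S ≥ 0 and let (T^i)_{i=0}^{N−1} be pairwise distinct measurable subsets of a region U with |U| = V, each satisfying δ ≤ |T^i|^{1/d}·a_i where ∑ over T^i in the dyadic class B_j := {i : 2^{-(j+1)}V < |T^i| ≤ 2^{-j}V} of a_i² is at most S². Then N ≤ ∑_{j≥0} min( 2^{-2j/d} δ^{-2} V^{2/d} S², 2^{j+1} ), and consequently N ≲ (δ^{-1} V^{1/d} S)^{2d/(2+d)}. -/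
/-!
A cell in the `j`-th dyadic class has measure at most `2^{-j} V`, so `δ ≤ |T|^{1/d} a` forces
`a² ≥ δ² (2^{-j} V)^{-2/d}` and the budget `∑ a² ≤ S²` admits at most `2^{-2j/d} X²` such cells,
where `X = δ⁻¹ V^{1/d} S`; disjointness admits at most `2^{j+1}`. Summing the smaller bound over
`j`, the series is cut at the crossover scale `2^n ≈ X^{2d/(2+d)}`: below it the terms `2^{j+1}`
add up to `O(2^n)`, above it the terms `2^{-2j/d} X²` form a geometric tail of the same size.
-/

open scoped Classical

open Finset

section Counting

variable {ι : Type*}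

lemma card_mul_sq_le_of_le_mul {s : Finset ι} {a : ι → ℝ} {δ w S : ℝ} (hδ : 0 ≤ δ)
    (h : ∀ i ∈ s, δ ≤ w * a i) (hS : ∑ i ∈ s, a i ^ 2 ≤ S ^ 2) :
    (#s : ℝ) * δ ^ 2 ≤ (w * S) ^ 2 := by
  have hsq : ∀ i ∈ s, δ ^ 2 ≤ w ^ 2 * a i ^ 2 := fun i hi => by
    rw [← mul_pow]
    exact pow_le_pow_left₀ hδ (h i hi) 2
  calc (#s : ℝ) * δ ^ 2 = #s • δ ^ 2 := (nsmul_eq_mul _ _).symm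
    _ ≤ ∑ i ∈ s, w ^ 2 * a i ^ 2 := card_nsmul_le_sum _ _ _ hsq
    _ = w ^ 2 * ∑ i ∈ s, a i ^ 2 := (mul_sum _ _ _).symm
    _ ≤ w ^ 2 * S ^ 2 := by gcongr
    _ = (w * S) ^ 2 := (mul_pow _ _ _).symm

lemma card_le_tsum_of_forall_exists_mem [Fintype ι] {B : ℕ → Finset ι} (hB : ∀ i, ∃ j, i ∈ B j)
    {g : ℕ → ℝ} (hg : Summable g) (hcard : ∀ j, (#(B j) : ℝ) ≤ g j) :
    (Fintype.card ι : ℝ) ≤ ∑' j, g j := by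
  choose J hJ using hB
  have hcover : (univ : Finset ι) ⊆ (univ.image J).biUnion B := fun i _ =>
    mem_biUnion.2 ⟨J i, mem_image_of_mem _ (mem_univ i), hJ i⟩
  calc (Fintype.card ι : ℝ) ≤ ∑ j ∈ univ.image J, (#(B j) : ℝ) := by
        exact_mod_cast (card_le_card hcover).trans card_biUnion_le
    _ ≤ ∑ j ∈ univ.image J, g j := sum_le_sum fun j _ => hcard j
    _ ≤ ∑' j, g j := hg.sum_le_tsum _ fun j _ => (Nat.cast_nonneg _).trans (hcard j)

end Counting

section DyadicClass

variable {ι : Type*} [Fintype ι]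

noncomputable def dyadicClass (V : ℝ) (m : ι → ℝ) (j : ℕ) : Finset ι :=
  univ.filter fun i => 2 ^ (-(j : ℝ) - 1) * V < m i ∧ m i ≤ 2 ^ (-(j : ℝ)) * V

lemma two_rpow_neg_natCast (n : ℕ) : (2 : ℝ) ^ (-(n : ℝ)) = ((2 : ℝ) ^ n)⁻¹ := by
  rw [Real.rpow_neg zero_le_two, Real.rpow_natCast]

lemma two_rpow_neg_natCast_sub_one (n : ℕ) : (2 : ℝ) ^ (-(n : ℝ) - 1) = ((2 : ℝ) ^ (n + 1))⁻¹ := by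
  rw [← two_rpow_neg_natCast]
  push_cast
  ring_nf

lemma exists_mem_dyadicClass {V : ℝ} {m : ι → ℝ} {i : ι} (hm : 0 < m i) (hmV : m i ≤ V) :
    ∃ j, i ∈ dyadicClass V m j := by
  obtain ⟨j, hj, hj1⟩ := exists_nat_pow_near ((one_le_div hm).2 hmV) one_lt_two
  refine ⟨j, mem_filter.2 ⟨mem_univ i, ?_, ?_⟩⟩
  · rw [two_rpow_neg_natCast_sub_one, inv_mul_eq_div, div_lt_iff₀ (by positivity)]
    rwa [div_lt_iff₀ hm, mul_comm] at hj1
  · rw [two_rpow_neg_natCast, inv_mul_eq_div, le_div_iff₀ (by positivity)]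
    rwa [le_div_iff₀ hm, mul_comm] at hj

lemma card_dyadicClass_le_two_pow {V : ℝ} {m : ι → ℝ} (hV : 0 < V) {j : ℕ}
    (hsum : ∑ i ∈ dyadicClass V m j, m i ≤ V) :
    (#(dyadicClass V m j) : ℝ) ≤ 2 ^ (j + 1) := by
  have hlow : ∀ i ∈ dyadicClass V m j, V / 2 ^ (j + 1) ≤ m i := fun i hi => by
    rw [← inv_mul_eq_div, ← two_rpow_neg_natCast_sub_one]
    exact (mem_filter.1 hi).2.1.le
  have h : (#(dyadicClass V m j) : ℝ) * (V / 2 ^ (j + 1)) ≤ V := by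
    rw [← nsmul_eq_mul]
    exact (card_nsmul_le_sum _ _ _ hlow).trans hsum
  rw [mul_div_assoc', div_le_iff₀ (by positivity)] at h
  exact le_of_mul_le_mul_right (by linarith) hV

lemma card_dyadicClass_le_sq {V δ S q : ℝ} {m a : ι → ℝ} (hV : 0 ≤ V) (hδ : 0 < δ) (hq : 0 ≤ q)
    (hδa : ∀ i, δ ≤ m i ^ q * a i) {j : ℕ} (hS : ∑ i ∈ dyadicClass V m j, a i ^ 2 ≤ S ^ 2) :
    (#(dyadicClass V m j) : ℝ) ≤ (δ⁻¹ * V ^ q * S) ^ 2 * (2 ^ (-(2 * q))) ^ j := by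
  have hle : ∀ i ∈ dyadicClass V m j, δ ≤ (2 ^ (-(j : ℝ)) * V) ^ q * a i := fun i hi => by
    obtain ⟨hlow, hup⟩ := (mem_filter.1 hi).2
    have hm : 0 ≤ m i := (by positivity : (0 : ℝ) ≤ 2 ^ (-(j : ℝ) - 1) * V).trans hlow.le
    have ha : 0 ≤ a i :=
      (pos_of_mul_pos_right (hδ.trans_le (hδa i)) (Real.rpow_nonneg hm q)).le
    exact (hδa i).trans (by gcongr)
  have h := card_mul_sq_le_of_le_mul hδ.le hle hS
  have hgeom : (((2 : ℝ) ^ (-(j : ℝ))) ^ q) ^ 2 = (2 ^ (-(2 * q))) ^ j := by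
    rw [← Real.rpow_natCast, ← Real.rpow_natCast, ← Real.rpow_mul zero_le_two,
      ← Real.rpow_mul zero_le_two, ← Real.rpow_mul zero_le_two]
    congr 1
    ring
  rw [Real.mul_rpow (by positivity) hV] at h
  calc (#(dyadicClass V m j) : ℝ) = #(dyadicClass V m j) * δ ^ 2 * δ⁻¹ ^ 2 := by field_simp
    _ ≤ ((2 ^ (-(j : ℝ))) ^ q * V ^ q * S) ^ 2 * δ⁻¹ ^ 2 := by gcongr
    _ = _ := by rw [← hgeom]; ring

end DyadicClass

section GeometricMinSeries

variable {r A : ℝ}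

lemma summable_min_mul_geometric (hr0 : 0 ≤ r) (hr1 : r < 1) (hA : 0 ≤ A) {b : ℕ → ℝ}
    (hb : ∀ j, 0 ≤ b j) : Summable fun j => min (A * r ^ j) (b j) :=
  ((summable_geometric_of_lt_one hr0 hr1).mul_left A).of_nonneg_of_le
    (fun j => le_min (by positivity) (hb j)) fun _ => min_le_left _ _

lemma tsum_min_mul_geometric_le (hr0 : 0 ≤ r) (hr1 : r < 1) (hA : 0 ≤ A) (n : ℕ) :
    ∑' j, min (A * r ^ j) (2 ^ (j + 1)) ≤ 2 * (2 ^ n - 1) + A * r ^ n / (1 - r) := by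
  have hg := summable_min_mul_geometric hr0 hr1 hA (b := fun j => (2 : ℝ) ^ (j + 1))
    fun _ => by positivity
  rw [← hg.sum_add_tsum_nat_add n]
  gcongr ?_ + ?_
  · calc ∑ j ∈ range n, min (A * r ^ j) (2 ^ (j + 1))
        ≤ ∑ j ∈ range n, 2 * (2 : ℝ) ^ j :=
          sum_le_sum fun j _ => (min_le_right _ _).trans_eq (pow_succ' 2 j)
      _ = 2 * (2 ^ n - 1) := by rw [← mul_sum, geom_sum_eq (by norm_num)]; norm_num
  · calc ∑' j, min (A * r ^ (j + n)) (2 ^ (j + n + 1))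
        ≤ ∑' j, A * r ^ n * r ^ j :=
          (hg.comp_injective (add_left_injective n)).tsum_le_tsum
            (fun j => (min_le_left _ _).trans_eq (by ring))
            ((summable_geometric_of_lt_one hr0 hr1).mul_left _)
      _ = A * r ^ n / (1 - r) := by
          rw [tsum_mul_left, tsum_geometric_of_lt_one hr0 hr1, div_eq_mul_inv]

lemma exists_two_pow_near {y : ℝ} (hy : 0 ≤ y) : ∃ n : ℕ, y ≤ 2 ^ n ∧ 2 ^ n ≤ 2 * y + 1 := by
  rcases lt_or_ge y 1 with hy1 | hy1
  · exact ⟨0, by simpa using hy1.le, by simpa using hy⟩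
  · obtain ⟨n, hn, hn1⟩ := exists_nat_pow_near hy1 one_lt_two
    exact ⟨n + 1, hn1.le, by rw [pow_succ]; linarith⟩

lemma tsum_min_rpow_mul_geometric_le {s B : ℝ} (hs : 0 < s) (hB : 0 ≤ B) :
    ∑' j, min (B ^ (1 + s) * (2 ^ (-s)) ^ j) (2 ^ (j + 1)) ≤ (4 + (1 - 2 ^ (-s))⁻¹) * B := by
  set r : ℝ := 2 ^ (-s) with hr
  have hr1 : r < 1 := Real.rpow_lt_one_of_one_lt_of_neg one_lt_two (neg_lt_zero.2 hs)
  obtain ⟨n, hBn, hnB⟩ := exists_two_pow_near hB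
  have htail : B ^ (1 + s) * r ^ n ≤ B := by
    have hcancel : ((2 : ℝ) ^ n) ^ s * r ^ n = 1 := by
      rw [hr, Real.rpow_pow_comm zero_le_two, Real.rpow_neg (by positivity),
        mul_inv_cancel₀ (by positivity)]
    calc B ^ (1 + s) * r ^ n = B * B ^ s * r ^ n := by
          rw [Real.rpow_add' hB (by linarith), Real.rpow_one]
      _ ≤ B * ((2 : ℝ) ^ n) ^ s * r ^ n := by gcongr
      _ = B := by rw [mul_assoc, hcancel, mul_one]
  have hr1' : 0 < 1 - r := by linarith
  calc _ ≤ 2 * (2 ^ n - 1) + B ^ (1 + s) * r ^ n / (1 - r) :=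
        tsum_min_mul_geometric_le (by positivity) hr1 (by positivity) n
    _ ≤ 4 * B + B / (1 - r) :=
        add_le_add (by linarith) (div_le_div_of_nonneg_right htail hr1'.le)
    _ = (4 + (1 - r)⁻¹) * B := by ring

end GeometricMinSeries

/-- dyadic counting lemma for the greedy algorithm:
pairwise distinct cells `T^i ⊆ U` with measures `m i`, classified dyadically by
`B_j = {i : 2^{-(j+1)}V < m i ≤ 2^{-j}V}`, satisfying `δ ≤ (m i)^{1/d} a i`,
`∑_{i ∈ B_j} (a i)² ≤ S²` and (by disjointness) `∑_{i ∈ B_j} m i ≤ V`, obey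
`N ≤ ∑_j min(2^{-2j/d} δ^{-2} V^{2/d} S², 2^{j+1})` and consequently
`N ≲ (δ⁻¹ V^{1/d} S)^{2d/(2+d)}` with a constant depending only on `d`. -/
theorem greedy_dyadic_counting (d : ℕ) (hd : 2 ≤ d) :
    ∃ C : ℝ, 0 < C ∧
    ∀ (N : ℕ) (V δ S : ℝ) (m a : Fin N → ℝ),
      0 < V → 0 < δ → 0 ≤ S →
      (∀ i, 0 < m i ∧ m i ≤ V) →
      (∀ i, 0 ≤ a i) →
      (∀ i, δ ≤ m i ^ ((1 : ℝ) / d) * a i) →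
      (∀ j : ℕ, ∑ i ∈ Finset.univ.filter
          (fun i => 2 ^ (-(j : ℝ) - 1) * V < m i ∧ m i ≤ 2 ^ (-(j : ℝ)) * V),
          (a i) ^ 2 ≤ S ^ 2) →
      (∀ j : ℕ, ∑ i ∈ Finset.univ.filter
          (fun i => 2 ^ (-(j : ℝ) - 1) * V < m i ∧ m i ≤ 2 ^ (-(j : ℝ)) * V),
          m i ≤ V) →
      (N : ℝ) ≤ (∑' j : ℕ,
          min (2 ^ (-(2 * (j : ℝ)) / d) * δ⁻¹ ^ 2 * V ^ ((2 : ℝ) / d) * S ^ 2)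
            (2 ^ ((j : ℝ) + 1))) ∧
      (N : ℝ) ≤ C * (δ⁻¹ * V ^ ((1 : ℝ) / d) * S) ^ ((2 * d : ℝ) / (2 + d)) := by
  have hd0 : (0 : ℝ) < d := by positivity
  set q : ℝ := 1 / d with hq
  set r : ℝ := 2 ^ (-(2 * q)) with hr
  have hr1 : r < 1 :=
    Real.rpow_lt_one_of_one_lt_of_neg one_lt_two (neg_neg_of_pos (by rw [hq]; positivity))
  refine ⟨4 + (1 - r)⁻¹, by have := sub_pos.2 hr1; positivity, ?_⟩
  intro N V δ S m a hV hδ hS hm _ hδa hB hBm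
  set X := δ⁻¹ * V ^ q * S with hX
  have hterm : ∀ j : ℕ,
      min (2 ^ (-(2 * (j : ℝ)) / d) * δ⁻¹ ^ 2 * V ^ ((2 : ℝ) / d) * S ^ 2) (2 ^ ((j : ℝ) + 1))
        = min (X ^ 2 * r ^ j) (2 ^ (j + 1)) := by
    intro j
    have hgeom : (2 : ℝ) ^ (-(2 * (j : ℝ)) / d) = r ^ j := by
      rw [hr, ← Real.rpow_natCast, ← Real.rpow_mul zero_le_two, hq]
      ring_nf
    have hV2 : V ^ ((2 : ℝ) / d) = (V ^ q) ^ 2 := by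
      rw [← Real.rpow_natCast, ← Real.rpow_mul hV.le, hq]
      ring_nf
    have htwo : (2 : ℝ) ^ ((j : ℝ) + 1) = 2 ^ (j + 1) := by
      exact_mod_cast Real.rpow_natCast 2 (j + 1)
    rw [hX, hgeom, hV2, htwo]
    ring_nf
  have hcount : (N : ℝ) ≤ ∑' j : ℕ, min (X ^ 2 * r ^ j) (2 ^ (j + 1)) := by
    simpa using card_le_tsum_of_forall_exists_mem
      (fun i => exists_mem_dyadicClass (hm i).1 (hm i).2)
      (summable_min_mul_geometric (by positivity) hr1 (by positivity) fun j => by positivity)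
      fun j => le_min (card_dyadicClass_le_sq hV.le hδ (by positivity) hδa (hB j))
        (card_dyadicClass_le_two_pow hV (hBm j))
  have hpow : X ^ 2 = (X ^ ((2 * d : ℝ) / (2 + d))) ^ (1 + 2 * q) := by
    rw [← Real.rpow_mul (by positivity), ← Real.rpow_natCast, hq]
    congr 1
    field_simp
    push_cast
    ring
  simp only [hterm]
  refine ⟨hcount, hcount.trans ?_⟩
  rw [hpow]
  exact tsum_min_rpow_mul_geometric_le (by positivity) (by positivity)
end
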